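/- arXiv:1907.04706 — 3 statements merged into one kernel-verified Lean document; each statement's English description precedes it below -/
import Mathlib

section
/- The planar control system ẋ = y² + y u₁, ẏ = 2y − u₁ + x u₂ is not α-STLC at the equilibrium (0, (0, u₂^eq)) for any α ≥ 0 and any u₂^eq ∈ ℝ, where 0 = (0,0) ∈ ℝ². -/
open MeasureTheory Set

noncomputable section

/-- The state space `ℝⁿ` with the Euclidean norm. -/
abbrev Vec (n : ℕ) : Type := EuclideanSpace ℝ (Fin n)

/-- Lie bracket of vector fields on `ℝⁿ`: `[f,g](x) = Dg(x)·f(x) − Df(x)·g(x)`. -/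
def lieBr {n : ℕ} (f g : Vec n → Vec n) : Vec n → Vec n :=
  fun x => fderiv ℝ g x (f x) - fderiv ℝ f x (g x)

/-- Formal iterated-bracket expressions in `m` symbols. -/
inductive BrExpr (m : ℕ) : Type
  | leaf : Fin m → BrExpr m
  | br : BrExpr m → BrExpr m → BrExpr m

namespace BrExpr

/-- Evaluation of a formal bracket expression on vector fields. -/
def eval {n m : ℕ} (f : Fin m → Vec n → Vec n) : BrExpr m → Vec n → Vec n
  | leaf i => f i
  | br a b => lieBr (eval f a) (eval f b)

/-- Number of occurrences of the symbol `i` in a bracket expression. -/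
def count {m : ℕ} (i : Fin m) : BrExpr m → ℕ
  | leaf j => if j = i then 1 else 0
  | br a b => count i a + count i b

end BrExpr

/-- `u` is (a.e.) measurable and a.e. bounded by `C` on `[0, ε]`:
an `L^∞([0,ε])` membership together with `‖u‖_{L^∞} ≤ C`. -/
def MeasBdd (ε C : ℝ) (u : ℝ → ℝ) : Prop :=
  AEStronglyMeasurable u (volume.restrict (Icc 0 ε)) ∧
    ∀ᵐ t ∂(volume.restrict (Icc 0 ε)), |u t| ≤ C

/-- `u` belongs to `W^{1,∞}([0,ε])` with `‖u‖_{L^∞} + ‖u'‖_{L^∞} ≤ C`: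
`u` is bounded by some `M` and Lipschitz with some constant `L` on `[0,ε]`,
where `M + L ≤ C`. -/
def W1Bdd (ε C : ℝ) (u : ℝ → ℝ) : Prop :=
  ∃ M L : ℝ, 0 ≤ M ∧ 0 ≤ L ∧ (∀ t ∈ Icc (0:ℝ) ε, |u t| ≤ M) ∧
    LipschitzOnWith (Real.toNNReal L) u (Icc 0 ε) ∧ M + L ≤ C

/-- `z` is a solution of `ż = f₀(z) + u₁ f₁(z) + u₂ f₂(z)` on `[0,ε]`
(absolutely continuous with the prescribed a.e. derivative, in integral form). -/
def IsSol2 {n : ℕ} (f₀ f₁ f₂ : Vec n → Vec n) (u₁ u₂ : ℝ → ℝ) (ε : ℝ) (z : ℝ → Vec n) : Prop :=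
  ContinuousOn z (Icc 0 ε) ∧
    ∀ t ∈ Icc (0:ℝ) ε,
      z t = z 0 + ∫ s in (0:ℝ)..t, (f₀ (z s) + u₁ s • f₁ (z s) + u₂ s • f₂ (z s))

/-- `R₁(0)`: the span of the values at `0` of all iterated Lie brackets of
`f₀, f₁, f₂` containing `f₁` at most one time. -/
def R1span {n : ℕ} (f₀ f₁ f₂ : Vec n → Vec n) : Submodule ℝ (Vec n) :=
  Submodule.span ℝ {v | ∃ b : BrExpr 3, b.count 1 ≤ 1 ∧ b.eval ![f₀, f₁, f₂] 0 = v}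

/-- `α`-STLC at the equilibrium `(0,(0,u2eq))` for the two-input system
`ż = g₀(z) + u₁ g₁(z) + u₂ g₂(z)`: controls with
`max(‖u₁‖_{L^∞}, ‖u₂ − u₂^eq‖_{L^∞}) ≤ α + ε`. -/
def AlphaSTLC2 {n : ℕ} (g₀ g₁ g₂ : Vec n → Vec n) (u2eq α : ℝ) : Prop :=
  ∀ ε > (0:ℝ), ∃ η > (0:ℝ), ∀ z₀ ∈ Metric.ball (0 : Vec n) η, ∀ z₁ ∈ Metric.ball (0 : Vec n) η,
    ∃ (u₁ u₂ : ℝ → ℝ) (z : ℝ → Vec n),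
      MeasBdd ε (α + ε) u₁ ∧ MeasBdd ε (α + ε) (fun t => u₂ t - u2eq) ∧
      IsSol2 g₀ g₁ g₂ u₁ u₂ ε z ∧ z 0 = z₀ ∧ z ε = z₁

/-!
From the origin, no point `(-δ, 0)` with `δ > 0` can be reached in short time. Along a
trajectory with `x(0) = y(0) = 0` and `y(T) = 0`, the identity `y(T)² = 2 ∫ y ẏ` gives
`∫ u₁ y = 2 ∫ y² + ∫ u₂ x y`, hence `x(T) = ∫ (y² + u₁ y) = 3 ∫ y² + ∫ u₂ x y`. The coupling term
is of higher order: `|x| ≤ (1 + A) ∫ |y|` together with Cauchy–Schwarz bounds it by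
`A (1 + A) T ∫ y²`, where `A` bounds the controls, so `x(T) ≥ 0` for small `T`. A continuity
argument keeps the trajectory in the unit ball, where these estimates hold.
-/

open Interval

theorem sq_sub_sq_eq_two_mul_integral_mul {y h : ℝ → ℝ} {a b : ℝ}
    (hh : IntervalIntegrable h volume a b)
    (hy : ∀ t ∈ [[a, b]], y t = y a + ∫ s in a..t, h s) :
    y b ^ 2 - y a ^ 2 = 2 * ∫ t in a..b, y t * h t := by
  set g : ℝ → ℝ := fun t => y a + ∫ s in a..t, h s
  have hg : AbsolutelyContinuousOnInterval g a b :=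
    (LipschitzWith.const (y a)).lipschitzOnWith.absolutelyContinuousOnInterval.add
      (hh.absolutelyContinuousOnInterval_intervalIntegral left_mem_uIcc)
  have hgy : ∀ t ∈ [[a, b]], g t = y t := fun t ht => (hy t ht).symm
  have hderiv : ∀ᵐ t, t ∈ Ι a b → deriv g t * g t + g t * deriv g t = 2 * (y t * h t) := by
    filter_upwards [hh.ae_hasDerivAt_integral] with t ht htab
    have htI : t ∈ [[a, b]] := uIoc_subset_uIcc htab
    rw [((ht htI a left_mem_uIcc).const_add (y a)).deriv, hgy t htI]
    ring
  rw [← intervalIntegral.integral_const_mul, ← intervalIntegral.integral_congr_ae hderiv,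
    hg.integral_deriv_mul_eq_sub hg, hgy a left_mem_uIcc, hgy b right_mem_uIcc]
  ring

theorem sq_integral_le_measureReal_mul_integral_sq {α : Type*} [MeasurableSpace α]
    {μ : Measure α} [IsFiniteMeasure μ] {f : α → ℝ} (hf : MemLp f 2 μ) :
    (∫ x, f x ∂μ) ^ 2 ≤ μ.real univ * ∫ x, f x ^ 2 ∂μ := by
  have hf1 : Integrable f μ := hf.integrable one_le_two
  have hf2 : Integrable (fun x => f x ^ 2) μ := hf.integrable_sq
  rcases (measureReal_nonneg (μ := μ) (s := univ)).eq_or_lt with hμ | hμ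
  · have : μ = 0 := by
      rw [← Measure.measure_univ_eq_zero]
      simpa [measureReal_def, ENNReal.toReal_eq_zero_iff, measure_ne_top] using hμ.symm
    simp [this]
  set c := (∫ x, f x ∂μ) / μ.real univ
  have hvar : 0 ≤ ∫ x, (f x - c) ^ 2 ∂μ := integral_nonneg fun x => sq_nonneg _
  have hexpand : ∫ x, (f x - c) ^ 2 ∂μ
      = ∫ x, f x ^ 2 ∂μ - 2 * c * ∫ x, f x ∂μ + c ^ 2 * μ.real univ := by
    have hlin : Integrable (fun x => f x ^ 2 - 2 * c * f x) μ := hf2.sub (hf1.const_mul _)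
    have hpoly : (fun x => (f x - c) ^ 2) = fun x => f x ^ 2 - 2 * c * f x + c ^ 2 := by
      funext x; ring
    rw [hpoly, integral_add hlin (integrable_const _), integral_sub hf2 (hf1.const_mul _),
      integral_const_mul, integral_const, smul_eq_mul]
    ring
  have hcμ : c * μ.real univ = ∫ x, f x ∂μ := div_mul_cancel₀ _ hμ.ne'
  nlinarith

theorem norm_lt_of_eq_integral_of_norm_le {E : Type*} [NormedAddCommGroup E] [NormedSpace ℝ E]
    {z G : ℝ → E} {ε r K : ℝ} (hz : ContinuousOn z (Icc 0 ε))
    (hzG : ∀ t ∈ Icc 0 ε, z t = ∫ s in 0..t, G s)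
    (hG : ∀ᵐ s, s ∈ Icc 0 ε → ‖z s‖ < r → ‖G s‖ ≤ K) (hK : 0 ≤ K) (hKε : K * ε < r) :
    ∀ t ∈ Icc 0 ε, ‖z t‖ < r := by
  by_contra! ⟨t₀, ht₀, hr⟩
  have hclosed : IsClosed (Icc 0 ε ∩ (fun t => ‖z t‖) ⁻¹' Ici r) :=
    hz.norm.preimage_isClosed_of_isClosed isClosed_Icc isClosed_Ici
  obtain ⟨T, ⟨hT, hTr⟩, hTmin⟩ :=
    (isCompact_Icc.of_isClosed_subset hclosed inter_subset_left).exists_isLeast ⟨t₀, ht₀, hr⟩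
  have hbefore : ∀ s ∈ Ico 0 T, ‖z s‖ < r := fun s hs => not_le.mp fun hs' =>
    (hTmin ⟨⟨hs.1, hs.2.le.trans hT.2⟩, hs'⟩).not_gt hs.2
  have hbound : ‖z T‖ ≤ K * |T - 0| := by
    rw [hzG T hT]
    refine intervalIntegral.norm_integral_le_of_norm_le_const_ae ?_
    filter_upwards [hG, Measure.ae_ne volume T] with s hs hsT hsI
    rw [uIoc_of_le hT.1] at hsI
    exact hs ⟨hsI.1.le, hsI.2.trans hT.2⟩ (hbefore s ⟨hsI.1.le, lt_of_le_of_ne hsI.2 hsT⟩)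
  have hKT : K * |T - 0| ≤ K * ε := by
    rw [sub_zero, abs_of_nonneg hT.1]
    exact mul_le_mul_of_nonneg_left hT.2 hK
  have hTr' : r ≤ ‖z T‖ := hTr
  linarith

theorem EuclideanSpace.norm_le_abs_add_abs_fin_two (v : EuclideanSpace ℝ (Fin 2)) :
    ‖v‖ ≤ |v 0| + |v 1| := by
  rw [EuclideanSpace.norm_eq, Fin.sum_univ_two, Real.norm_eq_abs, Real.norm_eq_abs, sq_abs,
    sq_abs, Real.sqrt_le_left (by positivity)]
  nlinarith [mul_nonneg (abs_nonneg (v 0)) (abs_nonneg (v 1)), sq_abs (v 0), sq_abs (v 1)]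

namespace MeasBdd

variable {ε C : ℝ} {u : ℝ → ℝ}

theorem mono (hu : MeasBdd ε C u) {C' : ℝ} (hC : C ≤ C') : MeasBdd ε C' u :=
  ⟨hu.1, hu.2.mono fun _ h => h.trans hC⟩

theorem of_sub_const {c : ℝ} (hu : MeasBdd ε C (fun t => u t - c)) : MeasBdd ε (C + |c|) u := by
  refine ⟨by simpa using hu.1.add_const c, hu.2.mono fun t h => ?_⟩
  calc |u t| = |(u t - c) + c| := by rw [sub_add_cancel]
    _ ≤ |u t - c| + |c| := abs_add_le _ _
    _ ≤ C + |c| := by gcongr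

theorem ae_abs_le (hu : MeasBdd ε C u) : ∀ᵐ t, t ∈ Icc 0 ε → |u t| ≤ C :=
  (ae_restrict_iff' measurableSet_Icc).mp hu.2

theorem integrableOn (hu : MeasBdd ε C u) : IntegrableOn u (Icc 0 ε) :=
  Integrable.of_bound hu.1 C (by simpa only [Real.norm_eq_abs] using hu.2)

theorem intervalIntegrable (hu : MeasBdd ε C u) (hε : 0 ≤ ε) : IntervalIntegrable u volume 0 ε :=
  (intervalIntegrable_iff_integrableOn_Ioc_of_le hε).mpr
    (hu.integrableOn.mono_set Ioc_subset_Icc_self)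

end MeasBdd

theorem IsSol2.apply_eq_add_integral {n : ℕ} {f₀ f₁ f₂ : Vec n → Vec n} {u₁ u₂ : ℝ → ℝ} {ε : ℝ}
    {z : ℝ → Vec n} (hz : IsSol2 f₀ f₁ f₂ u₁ u₂ ε z) (hf₀ : Continuous f₀)
    (hf₁ : Continuous f₁) (hf₂ : Continuous f₂) (hu₁ : IntegrableOn u₁ (Icc 0 ε))
    (hu₂ : IntegrableOn u₂ (Icc 0 ε)) (i : Fin n) {t : ℝ} (ht : t ∈ Icc 0 ε) :
    z t i = z 0 i + ∫ s in 0..t, (f₀ (z s) + u₁ s • f₁ (z s) + u₂ s • f₂ (z s)) i := by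
  have hG : IntegrableOn (fun s => f₀ (z s) + u₁ s • f₁ (z s) + u₂ s • f₂ (z s)) (Icc 0 ε) :=
    (((hf₀.comp_continuousOn hz.1).integrableOn_compact isCompact_Icc).add
      (hu₁.smul_continuousOn (hf₁.comp_continuousOn hz.1) isCompact_Icc)).add
      (hu₂.smul_continuousOn (hf₂.comp_continuousOn hz.1) isCompact_Icc)
  have hGt : IntervalIntegrable (fun s => f₀ (z s) + u₁ s • f₁ (z s) + u₂ s • f₂ (z s))
      volume 0 t :=
    (intervalIntegrable_iff_integrableOn_Ioc_of_le ht.1).mpr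
      (hG.mono_set (Ioc_subset_Icc_self.trans (Icc_subset_Icc le_rfl ht.2)))
  rw [hz.2 t ht, PiLp.add_apply]
  exact congrArg _ ((EuclideanSpace.proj i).intervalIntegral_comp_comm hGt).symm

namespace PlanarSystem

variable {x y u₁ u₂ : ℝ → ℝ} {ε A : ℝ}

theorem abs_x_le (hyc : ContinuousOn y (Icc 0 ε))
    (hy1 : ∀ t ∈ Icc 0 ε, |y t| ≤ 1) (hu₁ : MeasBdd ε A u₁)
    (hx : ∀ t ∈ Icc 0 ε, x t = ∫ s in 0..t, (y s ^ 2 + u₁ s * y s)) {t : ℝ}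
    (ht : t ∈ Icc 0 ε) : |x t| ≤ (1 + A) * ∫ s in 0..ε, |y s| := by
  have hε : 0 ≤ ε := ht.1.trans ht.2
  have hyI : IntervalIntegrable (fun s => (1 + A) * |y s|) volume 0 ε :=
    (ContinuousOn.intervalIntegrable (by rw [uIcc_of_le hε]; exact hyc.abs)).const_mul _
  rw [hx t ht, ← intervalIntegral.integral_const_mul]
  calc ‖∫ s in 0..t, (y s ^ 2 + u₁ s * y s)‖ ≤ ∫ s in 0..t, (1 + A) * |y s| := by
        refine intervalIntegral.norm_integral_le_of_norm_le ht.1 ?_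
          (hyI.mono_set (uIcc_subset_uIcc left_mem_uIcc (by rw [uIcc_of_le hε]; exact ht)))
        filter_upwards [hu₁.ae_abs_le] with s hs hsI
        have hsI' : s ∈ Icc 0 ε := ⟨hsI.1.le, hsI.2.trans ht.2⟩
        rw [Real.norm_eq_abs, show y s ^ 2 + u₁ s * y s = (y s + u₁ s) * y s by ring, abs_mul]
        exact mul_le_mul_of_nonneg_right
          ((abs_add_le _ _).trans (add_le_add (hy1 s hsI') (hs hsI'))) (abs_nonneg _)
    _ ≤ ∫ s in 0..ε, (1 + A) * |y s| := by
        refine intervalIntegral.integral_mono_interval le_rfl ht.1 ht.2 ?_ hyI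
        refine (ae_restrict_iff' measurableSet_Ioc).mpr ?_
        filter_upwards [hu₁.ae_abs_le] with s hs hsI
        have hA : 0 ≤ A := (abs_nonneg _).trans (hs (Ioc_subset_Icc_self hsI))
        exact mul_nonneg (by linarith) (abs_nonneg _)

theorem abs_integral_u₂_x_y_le (hε : 0 ≤ ε) (hA : 0 ≤ A) (hyc : ContinuousOn y (Icc 0 ε))
    (hy1 : ∀ t ∈ Icc 0 ε, |y t| ≤ 1) (hu₁ : MeasBdd ε A u₁) (hu₂ : MeasBdd ε A u₂)
    (hx : ∀ t ∈ Icc 0 ε, x t = ∫ s in 0..t, (y s ^ 2 + u₁ s * y s)) :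
    |∫ s in 0..ε, u₂ s * x s * y s| ≤ A * (1 + A) * ε * ∫ s in 0..ε, y s ^ 2 := by
  set J := ∫ s in 0..ε, |y s|
  have hyc' : ContinuousOn y [[0, ε]] := by rwa [uIcc_of_le hε]
  have hJ : J ^ 2 ≤ ε * ∫ s in 0..ε, y s ^ 2 := by
    have hmem : MemLp (fun s => |y s|) 2 (volume.restrict (Ioc 0 ε)) :=
      MemLp.of_bound ((hyc.abs.mono Ioc_subset_Icc_self).aestronglyMeasurable measurableSet_Ioc) 1
        ((ae_restrict_iff' measurableSet_Ioc).mpr (ae_of_all _ fun s hs => by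
          simpa using hy1 s (Ioc_subset_Icc_self hs)))
    simpa only [J, intervalIntegral.integral_of_le hε, measureReal_restrict_apply_univ,
      Real.volume_real_Ioc_of_le hε, sub_zero, sq_abs]
      using sq_integral_le_measureReal_mul_integral_sq hmem
  calc ‖∫ s in 0..ε, u₂ s * x s * y s‖ ≤ ∫ s in 0..ε, A * ((1 + A) * J) * |y s| := by
        refine intervalIntegral.norm_integral_le_of_norm_le hε ?_
          (hyc'.abs.intervalIntegrable.const_mul _)
        filter_upwards [hu₂.ae_abs_le] with s hs hsI
        have hsI' := Ioc_subset_Icc_self hsI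
        rw [Real.norm_eq_abs, abs_mul, abs_mul]
        exact mul_le_mul_of_nonneg_right (mul_le_mul (hs hsI')
          (abs_x_le hyc hy1 hu₁ hx hsI') (abs_nonneg _) hA)
          (abs_nonneg _)
    _ = A * (1 + A) * J ^ 2 := by rw [intervalIntegral.integral_const_mul]; ring
    _ ≤ A * (1 + A) * (ε * ∫ s in 0..ε, y s ^ 2) := by gcongr
    _ = A * (1 + A) * ε * ∫ s in 0..ε, y s ^ 2 := by ring

theorem integral_u₁_y_eq (hε : 0 ≤ ε) (hxc : ContinuousOn x (Icc 0 ε))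
    (hyc : ContinuousOn y (Icc 0 ε)) (hu₁ : MeasBdd ε A u₁) (hu₂ : MeasBdd ε A u₂)
    (hy : ∀ t ∈ Icc 0 ε, y t = ∫ s in 0..t, (2 * y s - u₁ s + u₂ s * x s)) (hyε : y ε = 0) :
    ∫ s in 0..ε, u₁ s * y s = 2 * (∫ s in 0..ε, y s ^ 2) + ∫ s in 0..ε, u₂ s * x s * y s := by
  have hIcc : [[0, ε]] = Icc 0 ε := uIcc_of_le hε
  have hxc' : ContinuousOn x [[0, ε]] := hIcc ▸ hxc
  have hyc' : ContinuousOn y [[0, ε]] := hIcc ▸ hyc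
  have hu₁I := hu₁.intervalIntegrable hε
  have hu₂xI := (hu₂.intervalIntegrable hε).mul_continuousOn hxc'
  have hy0 : y 0 = 0 := by simpa using hy 0 ⟨le_rfl, hε⟩
  have henergy := sq_sub_sq_eq_two_mul_integral_mul (y := y)
    ((hyc'.intervalIntegrable.const_mul 2).sub hu₁I |>.add hu₂xI)
    (fun t ht => by rw [hy0, zero_add]; exact hy t (hIcc ▸ ht))
  have hy2I : IntervalIntegrable (fun s => 2 * y s ^ 2) volume 0 ε :=
    (hyc'.pow 2).intervalIntegrable.const_mul 2
  have hexpand : ∫ t in 0..ε, y t * (2 * y t - u₁ t + u₂ t * x t)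
      = 2 * (∫ s in 0..ε, y s ^ 2) - (∫ s in 0..ε, u₁ s * y s)
        + ∫ s in 0..ε, u₂ s * x s * y s := by
    have hpoly : (fun t => y t * (2 * y t - u₁ t + u₂ t * x t))
        = fun t => (2 * y t ^ 2 - u₁ t * y t) + u₂ t * x t * y t := by
      funext t; ring
    rw [hpoly, intervalIntegral.integral_add (hy2I.sub (hu₁I.mul_continuousOn hyc'))
      (hu₂xI.mul_continuousOn hyc'), intervalIntegral.integral_sub hy2I
      (hu₁I.mul_continuousOn hyc'), intervalIntegral.integral_const_mul]
  rw [hyε, hy0, hexpand] at henergy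
  linarith

theorem x_nonneg_of_y_eq_zero (hε : 0 ≤ ε) (hA : 0 ≤ A)
    (hAε : A * (1 + A) * ε ≤ 3) (hxc : ContinuousOn x (Icc 0 ε))
    (hyc : ContinuousOn y (Icc 0 ε)) (hy1 : ∀ t ∈ Icc 0 ε, |y t| ≤ 1) (hu₁ : MeasBdd ε A u₁)
    (hu₂ : MeasBdd ε A u₂) (hx : ∀ t ∈ Icc 0 ε, x t = ∫ s in 0..t, (y s ^ 2 + u₁ s * y s))
    (hy : ∀ t ∈ Icc 0 ε, y t = ∫ s in 0..t, (2 * y s - u₁ s + u₂ s * x s)) (hyε : y ε = 0) :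
    0 ≤ x ε := by
  have hyc' : ContinuousOn y [[0, ε]] := by rwa [uIcc_of_le hε]
  have hxε : x ε = (∫ s in 0..ε, y s ^ 2) + ∫ s in 0..ε, u₁ s * y s := by
    have hy2I : IntervalIntegrable (fun s => y s ^ 2) volume 0 ε := (hyc'.pow 2).intervalIntegrable
    rw [hx ε ⟨hε, le_rfl⟩, intervalIntegral.integral_add hy2I
      ((hu₁.intervalIntegrable hε).mul_continuousOn hyc')]
  have hI : 0 ≤ ∫ s in 0..ε, y s ^ 2 := intervalIntegral.integral_nonneg hε fun s _ => sq_nonneg _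
  have hcoupling := abs_integral_u₂_x_y_le hε hA hyc hy1 hu₁ hu₂ hx
  have henergy := integral_u₁_y_eq hε hxc hyc hu₁ hu₂ hy hyε
  have hsmall := mul_le_mul_of_nonneg_right hAε hI
  linarith [neg_abs_le (∫ s in 0..ε, u₂ s * x s * y s)]

end PlanarSystem

abbrev IsPlanarSol (u₁ u₂ : ℝ → ℝ) (ε : ℝ) (z : ℝ → Vec 2) : Prop :=
  IsSol2 (fun z : Vec 2 => !₂[(z 1) ^ 2, 2 * z 1]) (fun z : Vec 2 => !₂[z 1, -1])
    (fun z : Vec 2 => !₂[0, z 0]) u₁ u₂ ε z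

section Planar

variable {u₁ u₂ : ℝ → ℝ} {ε A : ℝ} {z : ℝ → Vec 2}

theorem IsPlanarSol.coord_eq (hz : IsPlanarSol u₁ u₂ ε z) (hu₁ : IntegrableOn u₁ (Icc 0 ε))
    (hu₂ : IntegrableOn u₂ (Icc 0 ε)) {t : ℝ} (ht : t ∈ Icc 0 ε) :
    z t 0 = z 0 0 + ∫ s in 0..t, (z s 1 ^ 2 + u₁ s * z s 1) ∧
      z t 1 = z 0 1 + ∫ s in 0..t, (2 * z s 1 - u₁ s + u₂ s * z s 0) := by
  constructor
  · rw [hz.apply_eq_add_integral (by fun_prop) (by fun_prop) (by fun_prop) hu₁ hu₂ 0 ht]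
    simp
  · rw [hz.apply_eq_add_integral (by fun_prop) (by fun_prop) (by fun_prop) hu₁ hu₂ 1 ht]
    simp [sub_eq_add_neg]

theorem IsPlanarSol.norm_lt_one (hz : IsPlanarSol u₁ u₂ ε z) (hz0 : z 0 = 0)
    (hu₁ : MeasBdd ε A u₁) (hu₂ : MeasBdd ε A u₂) (hA : 0 ≤ A) (hε : 3 * (1 + A) * ε < 1) :
    ∀ t ∈ Icc 0 ε, ‖z t‖ < 1 := by
  refine norm_lt_of_eq_integral_of_norm_le hz.1 (fun t ht => by rw [hz.2 t ht, hz0, zero_add])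
    ?_ (by positivity) hε
  filter_upwards [hu₁.ae_abs_le, hu₂.ae_abs_le] with s hu₁s hu₂s hs hzs
  have hx : |z s 0| ≤ 1 := (PiLp.norm_apply_le (z s) 0).trans hzs.le
  have hy : |z s 1| ≤ 1 := (PiLp.norm_apply_le (z s) 1).trans hzs.le
  have h₁ := hu₁s hs
  have h₂ := hu₂s hs
  refine (EuclideanSpace.norm_le_abs_add_abs_fin_two _).trans ?_
  have hdrift : |z s 1 ^ 2 + u₁ s * z s 1| ≤ 1 + A := by
    rw [show z s 1 ^ 2 + u₁ s * z s 1 = (z s 1 + u₁ s) * z s 1 by ring, abs_mul]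
    nlinarith [abs_add_le (z s 1) (u₁ s), abs_nonneg (z s 1)]
  have hvert : |2 * z s 1 + -u₁ s + u₂ s * z s 0| ≤ 2 + 2 * A := by
    calc _ ≤ |2 * z s 1| + |-u₁ s| + |u₂ s * z s 0| := abs_add_three _ _ _
      _ = 2 * |z s 1| + |u₁ s| + |u₂ s| * |z s 0| := by rw [abs_mul, abs_neg, abs_mul, abs_two]
      _ ≤ 2 + 2 * A := by nlinarith [abs_nonneg (u₂ s), abs_nonneg (z s 0)]
  simp only [Fin.isValue, PiLp.add_apply, PiLp.smul_apply, smul_eq_mul, Matrix.cons_val_zero,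
    Matrix.cons_val_one, Matrix.cons_val_fin_one, mul_zero, add_zero, mul_neg, mul_one]
  linarith

theorem IsPlanarSol.coord_zero_nonneg_of_coord_one_eq_zero (hz : IsPlanarSol u₁ u₂ ε z)
    (hz0 : z 0 = 0) (hu₁ : MeasBdd ε A u₁) (hu₂ : MeasBdd ε A u₂) (hA : 0 ≤ A) (hε : 0 ≤ ε)
    (hAε : 4 * (1 + A) ^ 2 * ε ≤ 1) (hzε : z ε 1 = 0) : 0 ≤ z ε 0 := by
  have hsmall := hz.norm_lt_one hz0 hu₁ hu₂ hA (by nlinarith)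
  have hcoord := fun t (ht : t ∈ Icc 0 ε) => hz.coord_eq hu₁.integrableOn hu₂.integrableOn ht
  simp only [hz0, PiLp.zero_apply, zero_add] at hcoord
  exact PlanarSystem.x_nonneg_of_y_eq_zero hε hA (by nlinarith)
    ((EuclideanSpace.proj 0).continuous.comp_continuousOn hz.1)
    ((EuclideanSpace.proj 1).continuous.comp_continuousOn hz.1)
    (fun t ht => (PiLp.norm_apply_le (z t) 1).trans (hsmall t ht).le) hu₁ hu₂
    (fun t ht => (hcoord t ht).1) (fun t ht => (hcoord t ht).2) hzε

end Planar

/-- The planar system `ẋ = y² + y u₁`, `ẏ = 2y − u₁ + x u₂` is not `α`-STLC at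
`((0,0),(0,u₂^eq))` for any `α ≥ 0` and any `u₂^eq ∈ ℝ`. -/
theorem stmt10 :
    ∀ α : ℝ, 0 ≤ α → ∀ u2eq : ℝ,
      ¬ AlphaSTLC2 (fun z : Vec 2 => !₂[(z 1) ^ 2, 2 * z 1])
        (fun z : Vec 2 => !₂[z 1, -1])
        (fun z : Vec 2 => !₂[0, z 0]) u2eq α := by
  intro α hα u2eq hS
  -- once `ε ≤ 1`, `A` bounds both admissible controls `u₁` and `u₂`
  set A := α + 1 + |u2eq| with hAdef
  have hA : 0 ≤ A := by positivity
  set ε := (4 * (1 + A) ^ 2)⁻¹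
  have hε : 0 < ε := by positivity
  have hε1 : ε ≤ 1 := inv_le_one_of_one_le₀ (by nlinarith)
  obtain ⟨η, hη, H⟩ := hS ε hε
  have htarget : !₂[-(η / 2), 0] ∈ Metric.ball (0 : Vec 2) η := by
    rw [mem_ball_zero_iff]
    refine (EuclideanSpace.norm_le_abs_add_abs_fin_two _).trans_lt ?_
    simpa [abs_of_pos (half_pos hη)] using hη
  obtain ⟨u₁, u₂, z, hu₁, hu₂, hz, hz0, hzε⟩ := H 0 (Metric.mem_ball_self hη) _ htarget
  have hreach := IsPlanarSol.coord_zero_nonneg_of_coord_one_eq_zero hz hz0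
    (hu₁.mono (by linarith [abs_nonneg u2eq])) (hu₂.of_sub_const.mono (by linarith)) hA hε.le
    (mul_inv_cancel₀ (by positivity)).le (by simp [hzε])
  simp only [hzε, Fin.isValue, Matrix.cons_val_zero, Left.nonneg_neg_iff] at hreach
  linarith
end
end

section
/- Let α ≠ 0 be a real number. The planar control system ẋ = y² + y u₁ − (2/α) y² u₂, ẏ = 2y − u₁ − (1/α) y u₂ is not STLC at the equilibrium (0, (0, u₂^eq)) for any u₂^eq ∈ ℝ with u₂^eq ≠ α, where 0 = (0,0) ∈ ℝ². -/
open MeasureTheory Set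

noncomputable section

/-- STLC at the equilibrium `(0,(0,u2eq))` for the two-input system
`ż = g₀(z) + u₁ g₁(z) + u₂ g₂(z)`. -/
def STLC2 {n : ℕ} (g₀ g₁ g₂ : Vec n → Vec n) (u2eq : ℝ) : Prop :=
  ∀ ε > (0:ℝ), ∃ η > (0:ℝ), ∀ z₀ ∈ Metric.ball (0 : Vec n) η, ∀ z₁ ∈ Metric.ball (0 : Vec n) η,
    ∃ (u₁ u₂ : ℝ → ℝ) (z : ℝ → Vec n),
      MeasBdd ε ε u₁ ∧ MeasBdd ε ε (fun t => u₂ t - u2eq) ∧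
      IsSol2 g₀ g₁ g₂ u₁ u₂ ε z ∧ z 0 = z₀ ∧ z ε = z₁

/-! Along every trajectory `ẋ + y ẏ = 3 y² (α - u₂) / α`, whatever `u₁` is. Since `y` is absolutely
continuous, `∫ y ẏ = (y(ε)² - y(0)²) / 2`, so a trajectory from `0` that ends on the axis `y = 0`
ends at `x(ε) = ∫ 3 y² (α - u₂) / α`. When `|u₂ - u₂^eq| ≤ |α - u₂^eq|` this has the sign of
`α (α - u₂^eq)`, so the points `(x, 0)` with `x` of the other sign, however close to `0`, are never
reached. -/

theorem integral_primitive_mul_eq_sq_div_two {g : ℝ → ℝ} {a b : ℝ}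
    (hg : IntervalIntegrable g volume a b) :
    ∫ x in a..b, (∫ t in a..x, g t) * g x = (∫ x in a..b, g x) ^ 2 / 2 := by
  set G : ℝ → ℝ := fun x ↦ ∫ t in a..x, g t
  have hG : AbsolutelyContinuousOnInterval G a b :=
    hg.absolutelyContinuousOnInterval_intervalIntegral left_mem_uIcc
  have hderiv : ∫ x in a..b, deriv G x * G x + G x * deriv G x
      = ∫ x in a..b, 2 * (G x * g x) := by
    refine intervalIntegral.integral_congr_ae ?_
    filter_upwards [hg.ae_hasDerivAt_integral] with x hx hxab
    rw [(hx (uIoc_subset_uIcc hxab) a left_mem_uIcc).deriv]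
    ring
  have hparts := hG.integral_deriv_mul_eq_sub hG
  rw [hderiv, intervalIntegral.integral_const_mul] at hparts
  simp only [G, intervalIntegral.integral_same, mul_zero, sub_zero] at hparts
  linarith

theorem integral_mul_eq_sq_sub_sq_div_two {y g : ℝ → ℝ} {a b : ℝ}
    (hg : IntervalIntegrable g volume a b)
    (hy : ∀ x ∈ uIcc a b, y x = y a + ∫ t in a..x, g t) :
    ∫ x in a..b, y x * g x = (y b ^ 2 - y a ^ 2) / 2 := by
  have hcongr : ∫ x in a..b, y x * g x = ∫ x in a..b, (y a * g x + (∫ t in a..x, g t) * g x) :=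
    intervalIntegral.integral_congr fun x hx ↦ by simp only [hy x hx]; ring
  have hprim : IntervalIntegrable (fun x ↦ (∫ t in a..x, g t) * g x) volume a b :=
    hg.continuousOn_mul
      (hg.absolutelyContinuousOnInterval_intervalIntegral left_mem_uIcc).continuousOn
  rw [hcongr, intervalIntegral.integral_add (hg.const_mul _) hprim,
    intervalIntegral.integral_const_mul, integral_primitive_mul_eq_sq_div_two hg,
    hy b right_mem_uIcc]
  ring

theorem mul_sub_nonneg_of_abs_sub_le {a c v : ℝ} (h : |v - c| ≤ |a - c|) :
    0 ≤ (a - c) * (a - v) := by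
  have : (a - c) * (v - c) ≤ |a - c| * |a - c| :=
    (le_abs_self _).trans (by rw [abs_mul]; gcongr)
  nlinarith [sq_abs (a - c)]

def rhs2 {n : ℕ} (f₀ f₁ f₂ : Vec n → Vec n) (u₁ u₂ : ℝ → ℝ) (z : ℝ → Vec n) (s : ℝ) : Vec n :=
  f₀ (z s) + u₁ s • f₁ (z s) + u₂ s • f₂ (z s)

namespace IsSol2

variable {n : ℕ} {f₀ f₁ f₂ : Vec n → Vec n} {u₁ u₂ : ℝ → ℝ} {ε : ℝ} {z : ℝ → Vec n}

theorem eq_add_integral (hz : IsSol2 f₀ f₁ f₂ u₁ u₂ ε z) {t : ℝ} (ht : t ∈ Icc 0 ε) :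
    z t = z 0 + ∫ s in 0..t, rhs2 f₀ f₁ f₂ u₁ u₂ z s :=
  hz.2 t ht

-- The integral in `IsSol2` takes the junk value `0` when the right-hand side is not integrable.
theorem eq_of_not_intervalIntegrable (hz : IsSol2 f₀ f₁ f₂ u₁ u₂ ε z) (hε : 0 ≤ ε)
    (hF : ¬ IntervalIntegrable (rhs2 f₀ f₁ f₂ u₁ u₂ z) volume 0 ε) : z ε = z 0 := by
  simpa [intervalIntegral.integral_undef hF] using hz.eq_add_integral ⟨hε, le_rfl⟩

theorem apply_eq_add_integral_s11 (hz : IsSol2 f₀ f₁ f₂ u₁ u₂ ε z)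
    (hF : IntervalIntegrable (rhs2 f₀ f₁ f₂ u₁ u₂ z) volume 0 ε) (i : Fin n) {t : ℝ}
    (ht : t ∈ Icc 0 ε) : z t i = z 0 i + ∫ s in 0..t, rhs2 f₀ f₁ f₂ u₁ u₂ z s i := by
  have hFt : IntervalIntegrable (rhs2 f₀ f₁ f₂ u₁ u₂ z) volume 0 t :=
    hF.mono_set (uIcc_subset_uIcc left_mem_uIcc (by rw [uIcc_of_le (ht.1.trans ht.2)]; exact ht))
  have := congrArg (EuclideanSpace.proj i : Vec n →L[ℝ] ℝ) (hz.eq_add_integral ht)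
  rwa [map_add, ← ContinuousLinearMap.intervalIntegral_comp_comm _ hFt] at this

end IsSol2

theorem IntervalIntegrable.euclideanSpace_apply {n : ℕ} {F : ℝ → Vec n} {a b : ℝ}
    (hF : IntervalIntegrable F volume a b) (i : Fin n) :
    IntervalIntegrable (fun s ↦ F s i) volume a b :=
  ⟨hF.1.eval_piLp i, hF.2.eval_piLp i⟩

def planarDrift : Vec 2 → Vec 2 := fun z ↦ !₂[(z 1) ^ 2, 2 * z 1]
def planarCtrl₁ : Vec 2 → Vec 2 := fun z ↦ !₂[z 1, -1]
def planarCtrl₂ (α : ℝ) : Vec 2 → Vec 2 := fun z ↦ !₂[-(2 / α) * (z 1) ^ 2, -(1 / α) * z 1]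

theorem rhs2_planar_apply_zero_add_mul_apply_one {α : ℝ} (hα : α ≠ 0) (u₁ u₂ : ℝ → ℝ)
    (z : ℝ → Vec 2) (s : ℝ) :
    rhs2 planarDrift planarCtrl₁ (planarCtrl₂ α) u₁ u₂ z s 0
        + z s 1 * rhs2 planarDrift planarCtrl₁ (planarCtrl₂ α) u₁ u₂ z s 1
      = 3 * z s 1 ^ 2 * (α - u₂ s) / α := by
  simp only [rhs2, planarDrift, planarCtrl₁, planarCtrl₂, PiLp.add_apply, PiLp.smul_apply,
    smul_eq_mul, Matrix.cons_val_zero, Matrix.cons_val_one, Matrix.cons_val_fin_one]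
  field_simp
  ring

theorem exists_mem_ball_apply_one_eq_zero_mul_neg {D η : ℝ} (hD : D ≠ 0) (hη : 0 < η) :
    ∃ w ∈ Metric.ball (0 : Vec 2) η, w 1 = 0 ∧ D * w 0 < 0 := by
  refine ⟨EuclideanSpace.single 0 (-(η / 2) * (D / |D|)), ?_, by simp, ?_⟩
  · simpa [PiLp.norm_single, abs_of_pos hη, hD] using hη
  · have hDD : D * (D / |D|) = |D| := by
      rw [← mul_div_assoc, ← abs_mul_abs_self, mul_self_div_self]
    simp only [PiLp.single_apply, if_true]
    rw [neg_mul, mul_neg, neg_lt_zero, mul_left_comm, hDD]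
    positivity

section Planar

variable {α : ℝ} {u₁ u₂ : ℝ → ℝ} {ε : ℝ} {z : ℝ → Vec 2}

theorem IsSol2.planar_apply_add_sq_div_two (hα : α ≠ 0)
    (hz : IsSol2 planarDrift planarCtrl₁ (planarCtrl₂ α) u₁ u₂ ε z) (hε : 0 ≤ ε)
    (hF : IntervalIntegrable (rhs2 planarDrift planarCtrl₁ (planarCtrl₂ α) u₁ u₂ z) volume 0 ε) :
    z ε 0 + z ε 1 ^ 2 / 2
      = z 0 0 + z 0 1 ^ 2 / 2 + ∫ t in 0..ε, 3 * z t 1 ^ 2 * (α - u₂ t) / α := by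
  have hx := hz.apply_eq_add_integral_s11 hF 0 ⟨hε, le_rfl⟩
  have hy : ∫ t in 0..ε, z t 1 * rhs2 planarDrift planarCtrl₁ (planarCtrl₂ α) u₁ u₂ z t 1
      = (z ε 1 ^ 2 - z 0 1 ^ 2) / 2 :=
    integral_mul_eq_sq_sub_sq_div_two (hF.euclideanSpace_apply 1)
      fun t ht ↦ hz.apply_eq_add_integral_s11 hF 1 (by rwa [uIcc_of_le hε] at ht)
  have hyF : IntervalIntegrable
      (fun t ↦ z t 1 * rhs2 planarDrift planarCtrl₁ (planarCtrl₂ α) u₁ u₂ z t 1) volume 0 ε :=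
    (hF.euclideanSpace_apply 1).continuousOn_mul <| by
      rw [uIcc_of_le hε]
      exact (EuclideanSpace.proj (1 : Fin 2) : Vec 2 →L[ℝ] ℝ).continuous.comp_continuousOn hz.1
  have hsum : ∫ t in 0..ε, 3 * z t 1 ^ 2 * (α - u₂ t) / α
      = ∫ t in 0..ε, (rhs2 planarDrift planarCtrl₁ (planarCtrl₂ α) u₁ u₂ z t 0
          + z t 1 * rhs2 planarDrift planarCtrl₁ (planarCtrl₂ α) u₁ u₂ z t 1) :=
    intervalIntegral.integral_congr fun t _ ↦
      (rhs2_planar_apply_zero_add_mul_apply_one hα u₁ u₂ z t).symm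
  rw [hsum, intervalIntegral.integral_add (hF.euclideanSpace_apply 0) hyF, hy]
  linarith

theorem IsSol2.planar_mul_apply_zero_nonneg {c : ℝ} (hα : α ≠ 0)
    (hz : IsSol2 planarDrift planarCtrl₁ (planarCtrl₂ α) u₁ u₂ ε z) (hε : 0 ≤ ε) (hz₀ : z 0 = 0)
    (hzε : z ε 1 = 0) (hu₂ : ∀ᵐ t ∂volume.restrict (Icc 0 ε), |u₂ t - c| ≤ |α - c|) :
    0 ≤ α * (α - c) * z ε 0 := by
  by_cases hF :
    IntervalIntegrable (rhs2 planarDrift planarCtrl₁ (planarCtrl₂ α) u₁ u₂ z) volume 0 ε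
  · have hxε := hz.planar_apply_add_sq_div_two hα hε hF
    simp only [hzε, hz₀, PiLp.zero_apply] at hxε
    have hx : z ε 0 = ∫ t in 0..ε, 3 * z t 1 ^ 2 * (α - u₂ t) / α := by linarith
    rw [hx, ← intervalIntegral.integral_const_mul]
    refine intervalIntegral.integral_nonneg_of_ae_restrict hε ?_
    filter_upwards [hu₂] with t ht
    have hsign := mul_sub_nonneg_of_abs_sub_le ht
    calc (0 : ℝ) ≤ 3 * z t 1 ^ 2 * ((α - c) * (α - u₂ t)) := mul_nonneg (by positivity) hsign
      _ = α * (α - c) * (3 * z t 1 ^ 2 * (α - u₂ t) / α) := by field_simp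
  · simp [hz.eq_of_not_intervalIntegrable hε hF, hz₀]

end Planar

/-- The planar system `ẋ = y² + y u₁ − (2/α) y² u₂`, `ẏ = 2y − u₁ − (1/α) y u₂`
(`α ≠ 0`) is not STLC at `((0,0),(0,u₂^eq))` for any `u₂^eq ≠ α`. -/
theorem stmt11 (α : ℝ) (hα : α ≠ 0) :
    ∀ u2eq : ℝ, u2eq ≠ α →
      ¬ STLC2 (fun z : Vec 2 => !₂[(z 1) ^ 2, 2 * z 1])
        (fun z : Vec 2 => !₂[z 1, -1])
        (fun z : Vec 2 => !₂[-(2 / α) * (z 1) ^ 2, -(1 / α) * z 1]) u2eq := by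
  intro c hc hstlc
  have hαc : α - c ≠ 0 := sub_ne_zero.2 hc.symm
  obtain ⟨η, hη, H⟩ := hstlc |α - c| (abs_pos.2 hαc)
  obtain ⟨z₁, hz₁, hz₁y, hz₁x⟩ :=
    exists_mem_ball_apply_one_eq_zero_mul_neg (mul_ne_zero hα hαc) hη
  obtain ⟨u₁, u₂, z, -, ⟨-, hu₂⟩, hz, hz₀, rfl⟩ := H 0 (Metric.mem_ball_self hη) z₁ hz₁
  exact hz₁x.not_ge (hz.planar_mul_apply_zero_nonneg hα (abs_nonneg _) hz₀ hz₁y hu₂)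
end
end

section
/- Let u₁ ∈ L∞([0,T],ℝ), set v₁(t) = ∫₀ᵗ u₁(σ) dσ, and for an integer r ≥ 2 define w_r(s) = (1/r!) ∫₀ˢ ∫₀^τ u₁(τ) (τ − σ)^r u₁(σ) dσ dτ. Then for every s ∈ (0,T], |w_r(s)| ≤ |v₁(s)| · (‖v₁‖_{L²(0,s)}/(r−1)!) · s^{r−1/2}/√(2r−1) + (‖v₁‖²_{L²(0,s)}/(r−2)!) · s^{r−1}/√((2r−3)(2r−2)). -/
/-! Write `I` for the primitive from `0`. Cauchy's formula for repeated integration,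
`∫₀ᵗ (t - σ)ⁿ f σ dσ = n! Iⁿ⁺¹ f t`, obtained by integrating by parts `n` times, turns the inner
integral of `w_r` into `r! Iʳ v₁`, so `w_r(s) = ∫₀ˢ u₁ · Iʳ v₁`. One more integration by parts
(`v₁ = I u₁` is absolutely continuous) gives `w_r(s) = v₁(s) Iʳ v₁(s) - ∫₀ˢ Iʳ⁻¹ v₁ · v₁`.
Cauchy–Schwarz applied to Cauchy's formula bounds `|Iⁿ⁺¹ g(y)|` by
`‖g‖_{L²(0,y)} y^{n+1/2} / (n! √(2n+1))`; this handles the first term, and the second after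
one more Cauchy–Schwarz against the weight `y^{r-3/2}`. -/

open MeasureTheory Set

noncomputable def primitive (a : ℝ) (f : ℝ → ℝ) (x : ℝ) : ℝ := ∫ t in a..x, f t

theorem integral_mul_eq_sub_of_ae_hasDerivAt {F G f g : ℝ → ℝ} {a b : ℝ}
    (hF : AbsolutelyContinuousOnInterval F a b) (hG : AbsolutelyContinuousOnInterval G a b)
    (hFf : ∀ᵐ x, x ∈ uIcc a b → HasDerivAt F (f x) x)
    (hGg : ∀ᵐ x, x ∈ uIcc a b → HasDerivAt G (g x) x) :
    ∫ x in a..b, F x * g x = F b * G b - F a * G a - ∫ x in a..b, f x * G x := by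
  have hderiv : ∀ {H h : ℝ → ℝ}, (∀ᵐ x, x ∈ uIcc a b → HasDerivAt H (h x) x) →
      ∀ᵐ x, x ∈ uIoc a b → deriv H x = h x := fun hH => by
    filter_upwards [hH] with x hx hmem using (hx (uIoc_subset_uIcc hmem)).deriv
  calc ∫ x in a..b, F x * g x = ∫ x in a..b, F x * deriv G x :=
        intervalIntegral.integral_congr_ae (by
          filter_upwards [hderiv hGg] with x hx hmem using by rw [hx hmem])
    _ = F b * G b - F a * G a - ∫ x in a..b, deriv F x * G x :=
        hF.integral_mul_deriv_eq_deriv_mul hG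
    _ = _ := by
        congr 1
        exact intervalIntegral.integral_congr_ae (by
          filter_upwards [hderiv hFf] with x hx hmem using by rw [hx hmem])

@[simp] theorem primitive_self (a : ℝ) (f : ℝ → ℝ) : primitive a f a = 0 :=
  intervalIntegral.integral_same

namespace primitive

variable {f g : ℝ → ℝ} {a b : ℝ}

theorem continuousOn (hf : IntervalIntegrable f volume a b) :
    ContinuousOn (primitive a f) (uIcc a b) :=
  intervalIntegral.continuousOn_primitive_interval' hf left_mem_uIcc

theorem absolutelyContinuousOnInterval (hf : IntervalIntegrable f volume a b) :
    AbsolutelyContinuousOnInterval (primitive a f) a b :=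
  hf.absolutelyContinuousOnInterval_intervalIntegral left_mem_uIcc

theorem ae_hasDerivAt (hf : IntervalIntegrable f volume a b) :
    ∀ᵐ x, x ∈ uIcc a b → HasDerivAt (primitive a f) (f x) x := by
  filter_upwards [hf.ae_hasDerivAt_integral] with x hx hmem using hx hmem a left_mem_uIcc

theorem intervalIntegrable_iterate (hf : IntervalIntegrable f volume a b) :
    ∀ n, IntervalIntegrable ((primitive a)^[n] f) volume a b
  | 0 => hf
  | n + 1 => by
    rw [Function.iterate_succ_apply']
    exact (continuousOn (intervalIntegrable_iterate hf n)).intervalIntegrable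

theorem integral_mul (hf : IntervalIntegrable f volume a b) (hg : IntervalIntegrable g volume a b) :
    ∫ x in a..b, primitive a f x * g x
      = primitive a f b * primitive a g b - ∫ x in a..b, f x * primitive a g x := by
  simpa using integral_mul_eq_sub_of_ae_hasDerivAt (absolutelyContinuousOnInterval hf)
    (absolutelyContinuousOnInterval hg) (ae_hasDerivAt hf) (ae_hasDerivAt hg)

theorem integral_sub_pow_succ_mul (hf : IntervalIntegrable f volume a b) (n : ℕ) :
    ∫ t in a..b, (b - t) ^ (n + 1) * f t
      = (n + 1) * ∫ t in a..b, (b - t) ^ n * primitive a f t := by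
  have hpow (x : ℝ) : HasDerivAt (fun t => (b - t) ^ (n + 1)) (-((n + 1) * (b - x) ^ n)) x :=
    ((hasDerivAt_pow (n + 1) (b - x)).comp x ((hasDerivAt_id x).const_sub b)).congr_deriv
      (by push_cast; ring)
  have hac : AbsolutelyContinuousOnInterval (fun t => (b - t) ^ (n + 1)) a b :=
    ContDiffOn.absolutelyContinuousOnInterval (by fun_prop)
  have := integral_mul_eq_sub_of_ae_hasDerivAt hac (absolutelyContinuousOnInterval hf) (Filter.Eventually.of_forall fun x _ => hpow x)
    (ae_hasDerivAt hf)
  rw [this, ← intervalIntegral.integral_const_mul]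
  simp [neg_mul, mul_assoc]

theorem integral_sub_pow_mul_eq_factorial_mul (n : ℕ) (hf : IntervalIntegrable f volume a b) :
    ∫ t in a..b, (b - t) ^ n * f t = n.factorial * (primitive a)^[n + 1] f b := by
  induction n generalizing f with
  | zero => simp [primitive]
  | succ n ih =>
    rw [integral_sub_pow_succ_mul hf, ih ((continuousOn hf).intervalIntegrable),
      ← Function.iterate_succ_apply (primitive a) (n + 1), Nat.factorial_succ]
    push_cast; ring

end primitive

theorem inv_factorial_mul_integral_integral_sub_pow {u : ℝ → ℝ} {a b : ℝ}
    (hu : IntervalIntegrable u volume a b) (m : ℕ) :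
    ((m + 1).factorial : ℝ)⁻¹ * ∫ τ in a..b, ∫ σ in a..τ, u τ * (τ - σ) ^ (m + 1) * u σ
      = primitive a u b * (primitive a)^[m + 1] (primitive a u) b
        - ∫ y in a..b, (primitive a)^[m] (primitive a u) y * primitive a u y := by
  have hinner : EqOn (fun τ => ∫ σ in a..τ, u τ * (τ - σ) ^ (m + 1) * u σ)
      (fun τ => (m + 1).factorial * ((primitive a)^[m + 1] (primitive a u) τ * u τ))
      (uIcc a b) := by
    intro τ hτ
    simp only [mul_assoc, intervalIntegral.integral_const_mul]
    rw [primitive.integral_sub_pow_mul_eq_factorial_mul (m + 1)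
      (hu.mono_set (uIcc_subset_uIcc left_mem_uIcc hτ)), Function.iterate_succ_apply]
    ring
  have hiter : IntervalIntegrable ((primitive a)^[m] (primitive a u)) volume a b := by
    simpa only [← Function.iterate_succ_apply] using primitive.intervalIntegrable_iterate hu (m + 1)
  rw [intervalIntegral.integral_congr hinner, intervalIntegral.integral_const_mul,
    inv_mul_cancel_left₀ (by positivity), Function.iterate_succ_apply',
    primitive.integral_mul hiter hu, mul_comm]

theorem abs_integral_mul_le_sqrt_mul_sqrt {α : Type*} [MeasurableSpace α] {μ : Measure α}
    {f g : α → ℝ} (hf : MemLp f 2 μ) (hg : MemLp g 2 μ) :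
    |∫ x, f x * g x ∂μ| ≤ √(∫ x, f x ^ 2 ∂μ) * √(∫ x, g x ^ 2 ∂μ) := by
  have hLp := integral_mul_norm_le_Lp_mul_Lq (μ := μ) Real.HolderConjugate.two_two
    (by rwa [ENNReal.ofReal_ofNat]) (by rwa [ENNReal.ofReal_ofNat]) (f := f) (g := g)
  simp only [Real.norm_eq_abs, Real.rpow_two, sq_abs, ← Real.sqrt_eq_rpow] at hLp
  calc |∫ x, f x * g x ∂μ| ≤ ∫ x, |f x| * |g x| ∂μ := by
        simpa only [← abs_mul] using abs_integral_le_integral_abs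
    _ ≤ _ := hLp

theorem ContinuousOn.memLp_restrict_Ioc {f : ℝ → ℝ} {a b : ℝ} (hf : ContinuousOn f (Icc a b))
    (p : ENNReal) : MemLp f p (volume.restrict (Ioc a b)) := by
  obtain ⟨C, hC⟩ := isCompact_Icc.exists_bound_of_continuousOn hf
  refine MemLp.of_bound ((hf.mono Ioc_subset_Icc_self).aestronglyMeasurable measurableSet_Ioc) C ?_
  filter_upwards [ae_restrict_mem measurableSet_Ioc] with x hx using hC x (Ioc_subset_Icc_self hx)

theorem abs_intervalIntegral_mul_le_sqrt_mul_sqrt {f g : ℝ → ℝ} {a b : ℝ} (hab : a ≤ b)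
    (hf : ContinuousOn f (Icc a b)) (hg : ContinuousOn g (Icc a b)) :
    |∫ x in a..b, f x * g x| ≤ √(∫ x in a..b, f x ^ 2) * √(∫ x in a..b, g x ^ 2) := by
  simpa only [intervalIntegral.integral_of_le hab] using
    abs_integral_mul_le_sqrt_mul_sqrt (hf.memLp_restrict_Ioc 2) (hg.memLp_restrict_Ioc 2)

theorem integral_sub_pow_sq {a b : ℝ} (n : ℕ) :
    ∫ t in a..b, ((b - t) ^ n) ^ 2 = (b - a) ^ (2 * n + 1) / (2 * n + 1) := by
  simp_rw [← pow_mul]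
  rw [intervalIntegral.integral_comp_sub_left (fun t => t ^ (n * 2)), integral_pow]
  simp [mul_comm]

theorem abs_integral_sub_pow_mul_le {g : ℝ → ℝ} {a b : ℝ} (hab : a ≤ b)
    (hg : ContinuousOn g (Icc a b)) (n : ℕ) :
    |∫ t in a..b, (b - t) ^ n * g t|
      ≤ √((b - a) ^ (2 * n + 1) / (2 * n + 1)) * √(∫ t in a..b, g t ^ 2) := by
  rw [← integral_sub_pow_sq]
  exact abs_intervalIntegral_mul_le_sqrt_mul_sqrt hab (by fun_prop) hg

theorem integral_sqrt_pow_mul_abs_le {g : ℝ → ℝ} {b : ℝ} (hb : 0 ≤ b)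
    (hg : ContinuousOn g (Icc 0 b)) (k : ℕ) :
    ∫ y in 0..b, √(y ^ k) * |g y| ≤ √(b ^ (k + 1) / (k + 1)) * √(∫ y in 0..b, g y ^ 2) := by
  have hsq : ∫ y in 0..b, √(y ^ k) ^ 2 = b ^ (k + 1) / (k + 1) := by
    rw [intervalIntegral.integral_congr (g := fun y => y ^ k), integral_pow]
    · simp
    · intro y hy
      rw [uIcc_of_le hb] at hy
      exact Real.sq_sqrt (pow_nonneg hy.1 k)
  rw [← hsq]
  simpa only [sq_abs] using (le_abs_self _).trans
    (abs_intervalIntegral_mul_le_sqrt_mul_sqrt hb (by fun_prop) hg.abs)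

theorem abs_iterate_primitive_le {g : ℝ → ℝ} {a b : ℝ} (hab : a ≤ b)
    (hg : ContinuousOn g (Icc a b)) (n : ℕ) :
    |(primitive a)^[n + 1] g b|
      ≤ √((b - a) ^ (2 * n + 1) / (2 * n + 1)) * √(∫ t in a..b, g t ^ 2) / n.factorial := by
  have hfac : (0 : ℝ) < n.factorial := by positivity
  rw [le_div_iff₀ hfac, ← abs_of_pos hfac, ← abs_mul, mul_comm,
    ← primitive.integral_sub_pow_mul_eq_factorial_mul n (hg.intervalIntegrable_of_Icc hab)]
  exact abs_integral_sub_pow_mul_le hab hg n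

theorem abs_integral_iterate_primitive_mul_le {g : ℝ → ℝ} {b : ℝ} (hb : 0 ≤ b)
    (hg : ContinuousOn g (Icc 0 b)) (m : ℕ) :
    |∫ y in 0..b, (primitive 0)^[m + 1] g y * g y|
      ≤ (∫ y in 0..b, g y ^ 2) / m.factorial
        * √(b ^ (2 * m + 2) / ((2 * m + 1) * (2 * m + 2))) := by
  set K := ∫ y in 0..b, g y ^ 2
  have hint : IntervalIntegrable g volume 0 b := hg.intervalIntegrable_of_Icc hb
  have hcont : ContinuousOn ((primitive 0)^[m + 1] g) (Icc 0 b) := by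
    simpa [Function.iterate_succ_apply', uIcc_of_le hb] using
      primitive.continuousOn (primitive.intervalIntegrable_iterate hint m)
  set c := √K / (m.factorial * √(2 * m + 1))
  have hpt : ∀ y ∈ Icc 0 b,
      |(primitive 0)^[m + 1] g y * g y| ≤ c * (√(y ^ (2 * m + 1)) * |g y|) := by
    intro y hy
    have hKy : ∫ t in 0..y, g t ^ 2 ≤ K :=
      intervalIntegral.integral_mono_interval le_rfl hy.1 hy.2
        (Filter.Eventually.of_forall fun t => sq_nonneg (g t))
        ((hg.pow 2).intervalIntegrable_of_Icc hb)
    rw [abs_mul, ← mul_assoc]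
    gcongr
    calc |(primitive 0)^[m + 1] g y|
        ≤ √(y ^ (2 * m + 1) / (2 * m + 1)) * √(∫ t in 0..y, g t ^ 2) / m.factorial := by
          simpa using abs_iterate_primitive_le hy.1 (hg.mono (Icc_subset_Icc le_rfl hy.2)) m
      _ ≤ √(y ^ (2 * m + 1) / (2 * m + 1)) * √K / m.factorial := by gcongr
      _ = c * √(y ^ (2 * m + 1)) := by rw [Real.sqrt_div' _ (by positivity)]; ring
  calc |∫ y in 0..b, (primitive 0)^[m + 1] g y * g y|
      ≤ ∫ y in 0..b, |(primitive 0)^[m + 1] g y * g y| :=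
        intervalIntegral.abs_integral_le_integral_abs hb
    _ ≤ ∫ y in 0..b, c * (√(y ^ (2 * m + 1)) * |g y|) := by
        refine intervalIntegral.integral_mono_on hb ?_ ?_ hpt
        · exact ((hcont.mul hg).abs).intervalIntegrable_of_Icc hb
        · exact (ContinuousOn.intervalIntegrable_of_Icc hb (by fun_prop))
    _ = c * ∫ y in 0..b, √(y ^ (2 * m + 1)) * |g y| := intervalIntegral.integral_const_mul _ _
    _ ≤ c * (√(b ^ (2 * m + 1 + 1) / (2 * m + 1 + 1)) * √K) := by
        gcongr
        simpa using integral_sqrt_pow_mul_abs_le hb hg (2 * m + 1)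
    _ = K / m.factorial * √(b ^ (2 * m + 2) / ((2 * m + 1) * (2 * m + 2))) := by
        have hK : 0 ≤ K := intervalIntegral.integral_nonneg hb fun y _ => sq_nonneg (g y)
        simp only [c]
        rw [Real.sqrt_div' _ (by positivity), Real.sqrt_div' _ (by positivity),
          Real.sqrt_mul (by positivity)]
        field_simp
        rw [Real.sq_sqrt hK]
        ring_nf

theorem Real.sqrt_pow_div {s : ℝ} (hs : 0 ≤ s) (k : ℕ) (c : ℝ) :
    √(s ^ k / c) = s ^ ((k : ℝ) / 2) / √c := by
  rw [Real.sqrt_div (by positivity), Real.sqrt_eq_rpow, ← Real.rpow_natCast, ← Real.rpow_mul hs,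
    mul_one_div]

/-- Bound on `w_r(s) = (1/r!) ∫₀ˢ ∫₀^τ u₁(τ)(τ−σ)^r u₁(σ) dσ dτ` for `r ≥ 2` and
`s ∈ (0,T]`:
`|w_r(s)| ≤ |v₁(s)| (‖v₁‖_{L²(0,s)}/(r−1)!) s^{r−1/2}/√(2r−1)
            + (‖v₁‖²_{L²(0,s)}/(r−2)!) s^{r−1}/√((2r−3)(2r−2))`. -/
theorem stmt19 (T : ℝ) (u₁ : ℝ → ℝ)
    (hu₁ : MemLp u₁ ⊤ (volume.restrict (Icc 0 T)))
    (v₁ : ℝ → ℝ) (hv₁ : v₁ = fun t => ∫ σ in (0:ℝ)..t, u₁ σ)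
    (r : ℕ) (hr : 2 ≤ r)
    (w : ℝ → ℝ)
    (hw : w = fun s => ((r.factorial : ℝ))⁻¹ *
      ∫ τ in (0:ℝ)..s, ∫ σ in (0:ℝ)..τ, u₁ τ * (τ - σ) ^ r * u₁ σ) :
    ∀ s ∈ Ioc (0:ℝ) T,
      |w s| ≤ |v₁ s| * (Real.sqrt (∫ τ in (0:ℝ)..s, (v₁ τ) ^ 2) / ((r - 1).factorial : ℝ))
            * (s ^ ((r : ℝ) - 1/2) / Real.sqrt (2 * (r : ℝ) - 1))
          + ((∫ τ in (0:ℝ)..s, (v₁ τ) ^ 2) / ((r - 2).factorial : ℝ))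
            * (s ^ ((r : ℝ) - 1) / Real.sqrt ((2 * (r : ℝ) - 3) * (2 * (r : ℝ) - 2))) := by
  obtain ⟨m, rfl⟩ : ∃ m, r = m + 2 := ⟨r - 2, by omega⟩
  rintro s ⟨hs, hsT⟩
  have huT : IntegrableOn u₁ (Icc 0 T) := hu₁.integrable le_top
  have hu : IntervalIntegrable u₁ volume 0 s :=
    (intervalIntegrable_iff_integrableOn_Icc_of_le hs.le).2
      (huT.mono_set (Icc_subset_Icc_right hsT))
  have hv : v₁ = primitive 0 u₁ := hv₁
  have hvc : ContinuousOn v₁ (Icc 0 s) := by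
    simpa [hv, uIcc_of_le hs.le] using primitive.continuousOn hu
  have hid := inv_factorial_mul_integral_integral_sub_pow hu (m + 1)
  rw [← hv] at hid
  calc |w s| = |v₁ s * (primitive 0)^[m + 2] v₁ s
        - ∫ y in 0..s, (primitive 0)^[m + 1] v₁ y * v₁ y| := by rw [hw]; exact congrArg abs hid
    _ ≤ |v₁ s| * |(primitive 0)^[m + 2] v₁ s|
        + |∫ y in 0..s, (primitive 0)^[m + 1] v₁ y * v₁ y| := by rw [← abs_mul]; exact abs_sub _ _
    _ ≤ |v₁ s| * (√(s ^ (2 * (m + 1) + 1) / (2 * (m + 1 : ℕ) + 1))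
          * √(∫ τ in 0..s, v₁ τ ^ 2) / (m + 1).factorial)
        + (∫ τ in 0..s, v₁ τ ^ 2) / m.factorial
          * √(s ^ (2 * m + 2) / ((2 * m + 1) * (2 * m + 2))) := by
        gcongr
        · simpa using abs_iterate_primitive_le hs.le hvc (m + 1)
        · exact abs_integral_iterate_primitive_mul_le hs.le hvc m
    _ = _ := by
        rw [Real.sqrt_pow_div hs.le, Real.sqrt_pow_div hs.le]
        push_cast
        ring_nf
end
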